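/- arXiv:2602.03193 — 3 statements merged into one kernel-verified Lean document; each statement's English description precedes it below -/
import Mathlib

section
/- Let K be a field, A a finite-dimensional K-algebra, and e an idempotent of A. If A is a symmetric algebra (i.e., A is isomorphic to its K-linear dual Hom_K(A,K) as an A-A-bimodule), then the algebra eAe is also a symmetric algebra. -/
/-- A (possibly non-unital) finite-dimensional `K`-algebra is *symmetric* if it admits a
nondegenerate associative symmetric bilinear form into `K`. -/
def IsSymmAlg (K A : Type*) [Field K] [NonUnitalNonAssocRing A] [Module K A] : Prop :=
  ∃ f : A →ₗ[K] A →ₗ[K] K,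
    (∀ a b c : A, f (a * b) c = f a (b * c)) ∧
    (∀ a b : A, f a b = f b a) ∧
    (∀ a : A, (∀ b : A, f a b = 0) → a = 0)

/-- The corner algebra `eAe` of an idempotent `e`. -/
def corner (K : Type*) {A : Type*} [Field K] [Ring A] [Algebra K A] (e : A)
    (he : e * e = e) : NonUnitalSubalgebra K A where
  carrier := {x | e * x * e = x}
  add_mem' := by
    intro a b ha hb
    simp only [Set.mem_setOf_eq] at *
    rw [mul_add, add_mul, ha, hb]
  zero_mem' := by simp
  mul_mem' := by
    intro a b ha hb
    simp only [Set.mem_setOf_eq] at *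
    have h1 : e * a = a := by rw [← ha]; simp only [← mul_assoc, he]
    have h2 : b * e = b := by rw [← hb]; simp only [mul_assoc, he]
    calc e * (a * b) * e = (e * a) * (b * e) := by simp only [mul_assoc]
      _ = a * b := by rw [h1, h2]
  smul_mem' := by
    intro c x hx
    simp only [Set.mem_setOf_eq] at *
    rw [mul_smul_comm, smul_mul_assoc, hx]

/-! The nondegeneracy of the restricted form is the only point: pairing an element `a` of `eAe`
with an arbitrary `x ∈ A` is the same as pairing it with `exe ∈ eAe`, because an associative
symmetric form satisfies `f(eae, x) = f(a, exe)`. -/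

theorem LinearMap.apply_mul_mul_eq_apply_mul_mul {R A : Type*} [CommSemiring R]
    [NonUnitalSemiring A] [Module R A] {f : A →ₗ[R] A →ₗ[R] R}
    (hassoc : ∀ a b c : A, f (a * b) c = f a (b * c)) (hsymm : ∀ a b : A, f a b = f b a)
    (e a x : A) : f (e * a * e) x = f a (e * x * e) :=
  calc f (e * a * e) x = f e (a * e * x) := by rw [mul_assoc e, hassoc, mul_assoc]
    _ = f (a * e * x) e := hsymm _ _
    _ = f a (e * x * e) := by rw [hassoc, hassoc, mul_assoc e]

theorem mul_mul_mem_corner {K A : Type*} [Field K] [Ring A] [Algebra K A] {e : A}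
    (he : e * e = e) (x : A) : e * x * e ∈ corner K e he := by
  change e * (e * x * e) * e = e * x * e
  simp only [← mul_assoc, he]
  simp only [mul_assoc, he]

theorem stmt0_general {K A : Type*} [Field K] [Ring A] [Algebra K A]
    (e : A) (he : e * e = e) (hA : IsSymmAlg K A) :
    IsSymmAlg K (corner K e he) := by
  obtain ⟨f, hassoc, hsymm, hnondeg⟩ := hA
  let ι := (corner K e he).toSubmodule.subtype
  refine ⟨f.compl₁₂ ι ι, fun a b c => hassoc a b c, fun a b => hsymm a b, fun a ha => ?_⟩
  refine Subtype.ext (hnondeg a fun x => ?_)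
  calc f a x = f (e * a * e) x := by rw [a.2]
    _ = f a (e * x * e) := LinearMap.apply_mul_mul_eq_apply_mul_mul hassoc hsymm e a x
    _ = 0 := ha ⟨_, mul_mul_mem_corner he x⟩

/-- If `A` is a finite-dimensional symmetric `K`-algebra and `e` is an idempotent of `A`,
then the corner algebra `eAe` is also a symmetric algebra. -/
theorem stmt0 {K A : Type*} [Field K] [Ring A] [Algebra K A] [FiniteDimensional K A]
    (e : A) (he : e * e = e) (hA : IsSymmAlg K A) :
    IsSymmAlg K (corner K e he) :=
  stmt0_general e he hA
end

section
/- Let G be a finite group acting transitively on a finite set Ω with point stabilizer H = G_α, and suppose all nontrivial orbits of H on Ω \ {α} have the same size m (G is 3/2-transitive). Let p be a prime dividing m and P a Sylow p-subgroup of H. Then the normalizer N_G(P) is contained in H. -/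
/-- In a finite `3/2`-transitive permutation group (all orbits of the point stabilizer
`H = G_α` on `Ω \ {α}` have the same size `m`), for any prime `p` dividing `m` and any
Sylow `p`-subgroup `P` of `H`, the normalizer of `P` in `G` is contained in `H`. -/
theorem stmt7 {G : Type*} [Group G] [Finite G] {Ω : Type*} [Finite Ω] [MulAction G Ω]
    [MulAction.IsPretransitive G Ω] (α : Ω) (m : ℕ)
    (hm : ∀ β : Ω, β ≠ α →
      Nat.card (MulAction.orbit (MulAction.stabilizer G α) β) = m)
    (p : ℕ) (hp : p.Prime) (hpm : p ∣ m)
    (P : Sylow p (MulAction.stabilizer G α)) :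
    Subgroup.normalizer
        ((P : Subgroup (MulAction.stabilizer G α)).map (MulAction.stabilizer G α).subtype)
      ≤ MulAction.stabilizer G α := by
  haveI : Fact p.Prime := ⟨hp⟩
  intro x hx
  by_contra hxH
  have hβα : x • α ≠ α := hxH
  have hfix : ∀ g ∈ (P : Subgroup (MulAction.stabilizer G α)).map
      (MulAction.stabilizer G α).subtype, g • (x • α) = x • α := by
    intro g hg
    have hxinv : x⁻¹ ∈ Subgroup.normalizer _ := (Subgroup.normalizer _).inv_mem hx
    rw [Subgroup.mem_normalizer_iff] at hxinv
    have hmem : x⁻¹ * g * x ∈ (P : Subgroup (MulAction.stabilizer G α)).map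
        (MulAction.stabilizer G α).subtype := by
      have := (hxinv g).mp hg
      simpa using this
    have hα : (x⁻¹ * g * x) • α = α := Subgroup.map_subtype_le _ hmem
    calc g • (x • α) = (x * (x⁻¹ * g * x)) • α := by rw [← mul_smul]; group
      _ = x • ((x⁻¹ * g * x) • α) := by rw [mul_smul]
      _ = x • α := by rw [hα]
  have hPK : (P : Subgroup (MulAction.stabilizer G α)) ≤
      MulAction.stabilizer (MulAction.stabilizer G α) (x • α) := by
    intro h hh
    have : (h : G) • (x • α) = x • α := hfix _ ⟨h, hh, rfl⟩
    exact this
  have hindex : (MulAction.stabilizer (MulAction.stabilizer G α) (x • α)).index = m := by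
    rw [MulAction.index_stabilizer, ← Nat.card_coe_set_eq]
    exact hm _ hβα
  have hdvd : (MulAction.stabilizer (MulAction.stabilizer G α) (x • α)).index ∣
      (P : Subgroup (MulAction.stabilizer G α)).index := Subgroup.index_dvd_of_le hPK
  exact P.not_dvd_index ((hindex ▸ hpm).trans hdvd)
end

section
/- Let K be a field and A = K⟨x,y⟩/(xyx - yxy, x² + x, y² + y) (the 0-Hecke algebra of the symmetric group S₃). Then A is a 6-dimensional algebra, A is isomorphic to its opposite algebra A^op, but A is not a symmetric algebra. -/
/-- The defining relations of the 0-Hecke algebra of `S₃`: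
`K⟨x,y⟩/(xyx - yxy, x² + x, y² + y)`. -/
inductive rel16 (K : Type*) [Field K] :
    FreeAlgebra K (Fin 2) → FreeAlgebra K (Fin 2) → Prop
  | braid : rel16 K
      (FreeAlgebra.ι K 0 * FreeAlgebra.ι K 1 * FreeAlgebra.ι K 0)
      (FreeAlgebra.ι K 1 * FreeAlgebra.ι K 0 * FreeAlgebra.ι K 1)
  | xx : rel16 K (FreeAlgebra.ι K 0 * FreeAlgebra.ι K 0) (-(FreeAlgebra.ι K 0))
  | yy : rel16 K (FreeAlgebra.ι K 1 * FreeAlgebra.ι K 1) (-(FreeAlgebra.ι K 1))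

/-!
The words `1, x, y, xy, yx, xyx` span `A`: their span contains `1` and is stable under right
multiplication by `x` and `y`. They are linearly independent because the left regular
representation, written down as explicit `6 × 6` matrices, sends them to matrices whose first
columns are the standard basis vectors. The relations are palindromic, so `x ↦ x, y ↦ y` extends
to an anti-automorphism of `A`. Finally `a = xy + xyx = [xy, x]` is a nonzero commutator with
`a x = 0` and `a y = -a`, hence `a A = K a`. For an associative symmetric form `f` this makes
`f (a, b) = f (a b, 1)` a multiple of `f (a, 1)`, which vanishes on commutators, so `f` is
degenerate.
-/

open MulOpposite

section

variable {R A : Type*} [CommSemiring R] [Semiring A] [Algebra R A]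

theorem mul_mem_span_of_adjoin_eq_top {s t : Set A} (hs : Algebra.adjoin R s = ⊤)
    (ht : ∀ u ∈ t, ∀ g ∈ s, u * g ∈ Submodule.span R t) {p : A}
    (hp : p ∈ Submodule.span R t) (b : A) : p * b ∈ Submodule.span R t := by
  have hb : b ∈ Algebra.adjoin R s := hs ▸ Algebra.mem_top
  induction hb using Algebra.adjoin_induction generalizing p with
  | mem g hg =>
    exact Submodule.span_le (p := (Submodule.span R t).comap (LinearMap.mulRight R g)) |>.mpr
      (fun u hu => ht u hu g hg) hp
  | algebraMap r =>
    rw [Algebra.algebraMap_eq_smul_one, mul_smul_comm, mul_one]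
    exact Submodule.smul_mem _ r hp
  | add b c _ _ hb hc => rw [mul_add]; exact add_mem (hb hp) (hc hp)
  | mul b c _ _ hb hc => rw [← mul_assoc]; exact hc (hb hp)

theorem span_eq_top_of_adjoin_eq_top {s t : Set A} (hs : Algebra.adjoin R s = ⊤)
    (ht : ∀ u ∈ t, ∀ g ∈ s, u * g ∈ Submodule.span R t) (h1 : 1 ∈ Submodule.span R t) :
    Submodule.span R t = ⊤ :=
  eq_top_iff.mpr fun b _ => one_mul b ▸ mul_mem_span_of_adjoin_eq_top hs ht h1 b

theorem nonempty_algEquiv_op_of_involutive (τ : A →ₐ[R] Aᵐᵒᵖ)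
    (hτ : (AlgHom.opComm τ).comp τ = AlgHom.id R A) : Nonempty (A ≃ₐ[R] Aᵐᵒᵖ) := by
  have h (a : A) : unop (τ (unop (τ a))) = a := by
    simpa using AlgHom.congr_fun hτ a
  refine ⟨AlgEquiv.ofBijective τ (Function.bijective_iff_has_inverse.mpr
    ⟨fun c => unop (τ (unop c)), h, fun c => ?_⟩)⟩
  simpa using congrArg op (h (unop c))

end

theorem IsSymmAlg.commutator_eq_zero_of_mul_mem_span {K A : Type*} [Field K] [Ring A]
    [Algebra K A] (hA : IsSymmAlg K A) {p q : A}
    (hpq : ∀ b, (p * q - q * p) * b ∈ K ∙ (p * q - q * p)) : p * q - q * p = 0 := by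
  obtain ⟨f, hassoc, hsymm, hnd⟩ := hA
  have hf (a b : A) : f a b = f (a * b) 1 := by rw [hassoc, mul_one]
  refine hnd _ fun b => ?_
  obtain ⟨c, hc⟩ := Submodule.mem_span_singleton.mp (hpq b)
  rw [hf, ← hc, map_smul, LinearMap.smul_apply, map_sub, LinearMap.sub_apply, ← hf, ← hf,
    hsymm, sub_self, smul_zero]

namespace ZeroHecke

open Matrix

variable {K : Type*} [Field K]

/- A type synonym rather than an `abbrev`: through an `abbrev`, `RingQuot`'s own `Neg` instance
would not unify syntactically with the one coming from its `Ring` structure. -/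
variable (K) in
def Alg := RingQuot (rel16 K)

instance : Ring (Alg K) := inferInstanceAs (Ring (RingQuot (rel16 K)))

instance : Algebra K (Alg K) := inferInstanceAs (Algebra K (RingQuot (rel16 K)))

def mk : FreeAlgebra K (Fin 2) →ₐ[K] Alg K := RingQuot.mkAlgHom K (rel16 K)

def x : Alg K := mk (FreeAlgebra.ι K 0)

def y : Alg K := mk (FreeAlgebra.ι K 1)

theorem x_mul_x : (x * x : Alg K) = -x := by
  rw [x, ← map_mul, ← map_neg]
  exact RingQuot.mkAlgHom_rel K rel16.xx

theorem y_mul_y : (y * y : Alg K) = -y := by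
  rw [y, ← map_mul, ← map_neg]
  exact RingQuot.mkAlgHom_rel K rel16.yy

theorem x_mul_y_mul_x : (x * y * x : Alg K) = y * x * y := by
  rw [x, y, ← map_mul, ← map_mul, ← map_mul, ← map_mul]
  exact RingQuot.mkAlgHom_rel K rel16.braid

theorem mul_x_mul_x (a : Alg K) : a * x * x = -(a * x) := by
  rw [mul_assoc, x_mul_x, mul_neg]

theorem mul_y_mul_y (a : Alg K) : a * y * y = -(a * y) := by
  rw [mul_assoc, y_mul_y, mul_neg]

theorem x_mul_y_mul_x_mul_y : (x * y * x * y : Alg K) = -(x * y * x) := by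
  rw [x_mul_y_mul_x, mul_y_mul_y]

theorem adjoin_x_y : Algebra.adjoin K {x, y} = (⊤ : Subalgebra K (Alg K)) := by
  have hxy : {x, y} = mk '' Set.range (FreeAlgebra.ι K (X := Fin 2)) := by
    ext; simp [Fin.exists_fin_two, x, y, eq_comm]
  rw [hxy, Algebra.adjoin_image, FreeAlgebra.adjoin_range_ι, Algebra.map_top,
    AlgHom.range_eq_top]
  exact RingQuot.mkAlgHom_surjective K (rel16 K)

theorem algHom_ext {B : Type*} [Semiring B] [Algebra K B] {f g : Alg K →ₐ[K] B}
    (hx : f x = g x) (hy : f y = g y) : f = g :=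
  RingQuot.ringQuot_ext' _ _ _ <| FreeAlgebra.hom_ext <| funext <| Fin.forall_fin_two.mpr ⟨hx, hy⟩

section lift

variable {B : Type*} [Ring B] [Algebra K B] (X Y : B)

def lift (hX : X * X = -X) (hY : Y * Y = -Y) (hXY : X * Y * X = Y * X * Y) :
    Alg K →ₐ[K] B :=
  RingQuot.liftAlgHom K ⟨FreeAlgebra.lift K ![X, Y], fun _ _ h => by cases h <;> simpa⟩

variable {X Y} (hX : X * X = -X) (hY : Y * Y = -Y) (hXY : X * Y * X = Y * X * Y)

@[simp] theorem lift_x : lift X Y hX hY hXY (x : Alg K) = X :=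
  (RingQuot.liftAlgHom_mkAlgHom_apply ..).trans (FreeAlgebra.lift_ι_apply ..)

@[simp] theorem lift_y : lift X Y hX hY hXY (y : Alg K) = Y :=
  (RingQuot.liftAlgHom_mkAlgHom_apply ..).trans (FreeAlgebra.lift_ι_apply ..)

end lift

def T : Fin 6 → Alg K := ![1, x, y, x * y, y * x, x * y * x]

theorem span_range_T : Submodule.span K (Set.range (T (K := K))) = ⊤ := by
  refine span_eq_top_of_adjoin_eq_top adjoin_x_y ?_ (Submodule.subset_span ⟨0, rfl⟩)
  simp only [T, Matrix.range_cons, Matrix.range_empty, Set.union_empty, Set.singleton_union,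
    Set.forall_mem_insert, Set.mem_singleton_iff, forall_eq, one_mul, x_mul_x, y_mul_y,
    mul_x_mul_x, mul_y_mul_y, ← x_mul_y_mul_x, x_mul_y_mul_x_mul_y, Submodule.neg_mem_iff]
  refine ⟨⟨?_, ?_⟩, ⟨?_, ?_⟩, ⟨?_, ?_⟩, ⟨?_, ?_⟩, ⟨?_, ?_⟩, ⟨?_, ?_⟩⟩ <;>
    exact Submodule.subset_span (by simp)

/- Left multiplication by `x` and `y` in the basis `T` (column `j` holds the coordinates of
`x * T j`, resp. `y * T j`). -/
def X : Matrix (Fin 6) (Fin 6) K :=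
  single 1 0 1 - single 1 1 1 + single 3 2 1 - single 3 3 1 + single 5 4 1 - single 5 5 1

def Y : Matrix (Fin 6) (Fin 6) K :=
  single 2 0 1 - single 2 2 1 + single 4 1 1 - single 4 4 1 + single 5 3 1 - single 5 5 1

theorem X_mul_X : (X * X : Matrix (Fin 6) (Fin 6) K) = -X := by
  simp only [X, mul_sub, sub_mul, mul_add, add_mul, single_mul_single_same,
    single_mul_single_of_ne, ne_eq, Fin.reduceEq, not_false_eq_true, one_mul]
  abel

theorem Y_mul_Y : (Y * Y : Matrix (Fin 6) (Fin 6) K) = -Y := by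
  simp only [Y, mul_sub, sub_mul, mul_add, add_mul, single_mul_single_same,
    single_mul_single_of_ne, ne_eq, Fin.reduceEq, not_false_eq_true, one_mul]
  abel

theorem X_mul_Y_mul_X : (X * Y * X : Matrix (Fin 6) (Fin 6) K) = Y * X * Y := by
  simp only [X, Y, mul_sub, sub_mul, mul_add, add_mul, single_mul_single_same,
    single_mul_single_of_ne, ne_eq, Fin.reduceEq, not_false_eq_true, one_mul]
  abel

def leftRegular : Alg K →ₐ[K] Matrix (Fin 6) (Fin 6) K :=
  lift X Y X_mul_X Y_mul_Y X_mul_Y_mul_X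

theorem leftRegular_T_mulVec (i : Fin 6) :
    leftRegular (T i) *ᵥ Pi.single 0 1 = Pi.single i (1 : K) := by
  obtain ⟨hX0, hX2, hX4, hY0, hY1⟩ : X *ᵥ Pi.single 0 1 = Pi.single 1 (1 : K) ∧
      X *ᵥ Pi.single 2 1 = Pi.single 3 (1 : K) ∧ X *ᵥ Pi.single 4 1 = Pi.single 5 (1 : K) ∧
      Y *ᵥ Pi.single 0 1 = Pi.single 2 (1 : K) ∧ Y *ᵥ Pi.single 1 1 = Pi.single 4 (1 : K) := by
    refine ⟨?_, ?_, ?_, ?_, ?_⟩ <;> ext k <;> fin_cases k <;>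
      simp [X, Y, mulVec, dotProduct, Fin.sum_univ_six, single_apply]
  fin_cases i <;>
    simp only [Fin.reduceFinMk, leftRegular, T, Matrix.cons_val, map_one, map_mul, lift_x,
      lift_y, ← mulVec_mulVec, one_mulVec, hX0, hX2, hX4, hY0, hY1]

theorem linearIndependent_T : LinearIndependent K (T (K := K)) := by
  refine LinearIndependent.of_comp
    ((mulVecBilin K K).flip (Pi.single 0 1) ∘ₗ (leftRegular (K := K)).toLinearMap) ?_
  convert (Pi.basisFun K (Fin 6)).linearIndependent
  ext1 i
  simpa using leftRegular_T_mulVec (K := K) i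

noncomputable def basisT : Module.Basis (Fin 6) K (Alg K) :=
  .mk linearIndependent_T span_range_T.ge

theorem finrank_eq_six : Module.finrank K (Alg K) = 6 := by
  simp [Module.finrank_eq_card_basis basisT]

def reverse : Alg K →ₐ[K] (Alg K)ᵐᵒᵖ :=
  lift (op x) (op y) (by rw [← op_mul, x_mul_x, op_neg]) (by rw [← op_mul, y_mul_y, op_neg])
    (by simp only [← op_mul, ← mul_assoc, x_mul_y_mul_x])

theorem opComm_reverse_comp_reverse :
    (AlgHom.opComm reverse).comp reverse = AlgHom.id K (Alg K) :=
  algHom_ext (by simp [reverse]) (by simp [reverse])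

theorem nonempty_algEquiv_op : Nonempty (Alg K ≃ₐ[K] (Alg K)ᵐᵒᵖ) :=
  nonempty_algEquiv_op_of_involutive reverse opComm_reverse_comp_reverse

theorem x_mul_y_mul_x_sub_x_mul_x_mul_y :
    x * y * x - x * (x * y) = (x * y + x * y * x : Alg K) := by
  rw [← mul_assoc, x_mul_x, neg_mul, sub_neg_eq_add, add_comm]

theorem x_mul_y_add_x_mul_y_mul_x_ne_zero : (x * y + x * y * x : Alg K) ≠ 0 := by
  intro h
  have h35 : basisT 3 + basisT 5 = (0 : Alg K) := by simpa [basisT, T] using h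
  simpa using congrArg (fun a => basisT.repr a 3) h35

theorem mul_mem_span_x_mul_y_add_x_mul_y_mul_x (b : Alg K) :
    (x * y + x * y * x) * b ∈ K ∙ (x * y + x * y * x) := by
  refine mul_mem_span_of_adjoin_eq_top adjoin_x_y ?_ (Submodule.mem_span_singleton_self _) b
  have hx : (x * y + x * y * x) * x = (0 : Alg K) := by
    rw [add_mul, mul_x_mul_x, add_neg_cancel]
  have hy : (x * y + x * y * x) * y = -(x * y + x * y * x : Alg K) := by
    rw [add_mul, mul_y_mul_y, x_mul_y_mul_x_mul_y, neg_add]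
  simp only [Set.forall_mem_insert, Set.mem_singleton_iff, forall_eq, hx, hy]
  exact ⟨zero_mem _, neg_mem (Submodule.mem_span_singleton_self _)⟩

theorem not_isSymmAlg : ¬ IsSymmAlg K (Alg K) := by
  intro h
  apply x_mul_y_add_x_mul_y_mul_x_ne_zero (K := K)
  rw [← x_mul_y_mul_x_sub_x_mul_x_mul_y]
  refine h.commutator_eq_zero_of_mul_mem_span fun b => ?_
  rw [x_mul_y_mul_x_sub_x_mul_x_mul_y]
  exact mul_mem_span_x_mul_y_add_x_mul_y_mul_x b

end ZeroHecke

/-- The 0-Hecke algebra `A = K⟨x,y⟩/(xyx - yxy, x² + x, y² + y)` of `S₃` is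
6-dimensional, isomorphic to its opposite algebra, but not a symmetric algebra. -/
theorem stmt16 (K : Type*) [Field K] :
    Module.finrank K (RingQuot (rel16 K)) = 6 ∧
    Nonempty (RingQuot (rel16 K) ≃ₐ[K] (RingQuot (rel16 K))ᵐᵒᵖ) ∧
    ¬ IsSymmAlg K (RingQuot (rel16 K)) :=
  ⟨ZeroHecke.finrank_eq_six, ZeroHecke.nonempty_algEquiv_op, ZeroHecke.not_isSymmAlg⟩
end
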